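/- arXiv:1012.2851 — 4 statements merged into one kernel-verified Lean document; each statement's English description precedes it below -/
import Mathlib

section
/- The set B̃ := { e_a − e_{g_j} − e_{a−g_j} : 1 ≤ j ≤ m, a ∈ A } generates the subgroup R of F (here e_0 = 0 by convention, so terms with a = g_j or a = 0 degenerate accordingly). -/
/-!
Modulo the subgroup generated by `B̃`, the map `a ↦ e a` satisfies `e (a + g j) = e a + e (g j)`
for every generator `g j`. Since the `g j` generate `A`, additivity along the generators
propagates to additivity on all of `A`, so every generator `e (a + b) - e a - e b` of `R`
vanishes in the quotient.
-/

/-- Basis element of the free abelian group on the nonzero elements of `A`,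
with the convention `e 0 = 0`. -/
noncomputable def e {A : Type*} [AddCommGroup A] [DecidableEq A] (a : A) : ({x : A // x ≠ 0} →₀ ℤ) :=
  if h : a = 0 then 0 else Finsupp.single ⟨a, h⟩ 1

theorem DirectSum.IsInternal.addSubgroup_iSup_eq_top {ι A : Type*} [DecidableEq ι] [AddCommGroup A]
    {H : ι → AddSubgroup A} (h : DirectSum.IsInternal H) : iSup H = ⊤ := by
  have hM : ⨆ i, (H i).toAddSubmonoid = ⊤ := IsInternal.addSubmonoid_iSup_eq_top _ h
  refine eq_top_iff.2 fun a _ => ?_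
  have ha : a ∈ ⨆ i, (H i).toAddSubmonoid := hM ▸ AddSubmonoid.mem_top a
  exact iSup_le (fun i => AddSubgroup.toAddSubmonoid_mono (le_iSup H i)) ha

theorem AddSubgroup.closure_range_eq_top_of_isInternal {ι A : Type*} [DecidableEq ι] [AddCommGroup A]
    {H : ι → AddSubgroup A} {g : ι → A} (hH : ∀ i, H i = zmultiples (g i))
    (h : DirectSum.IsInternal H) : closure (Set.range g) = ⊤ := by
  rw [← Set.iUnion_singleton_eq_range, closure_iUnion]
  simpa only [← zmultiples_eq_closure, ← hH] using h.addSubgroup_iSup_eq_top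

theorem map_add_of_closure_eq_top {A G : Type*} [AddGroup A] [AddGroup G] {s : Set A}
    (hs : AddSubgroup.closure s = ⊤) {f : A → G} (h0 : f 0 = 0)
    (hf : ∀ a, ∀ x ∈ s, f (a + x) = f a + f x) (a b : A) : f (a + b) = f a + f b := by
  have hb : b ∈ AddSubgroup.closure s := hs ▸ AddSubgroup.mem_top b
  induction hb using AddSubgroup.closure_induction generalizing a with
  | mem x hx => exact hf a x hx
  | zero => rw [add_zero, h0, add_zero]
  | add x y _ _ hx hy => rw [← add_assoc, hy, hx, hy x, add_assoc]
  | neg x _ hx =>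
    have hneg : f (-x) = -f x := by
      rw [eq_neg_iff_add_eq_zero, ← hx, neg_add_cancel, h0]
    rw [hneg, eq_add_neg_iff_add_eq, ← hx, neg_add_cancel_right]

theorem closure_Btilde_eq_R_general {A : Type*} [AddCommGroup A] [DecidableEq A]
    (m : ℕ) (g : Fin m → A) (H : Fin m → AddSubgroup A)
    (hH : ∀ j, H j = AddSubgroup.zmultiples (g j))
    (hInt : DirectSum.IsInternal H) :
    AddSubgroup.closure
        {x : {x : A // x ≠ 0} →₀ ℤ | ∃ (j : Fin m) (a : A), x = e a - e (g j) - e (a - g j)}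
      = AddSubgroup.closure
        {x : {x : A // x ≠ 0} →₀ ℤ | ∃ a b : A, x = e (a + b) - e a - e b} := by
  refine le_antisymm (AddSubgroup.closure_mono ?_) ?_
  · rintro _ ⟨j, a, rfl⟩
    exact ⟨a - g j, g j, by rw [sub_add_cancel]; abel⟩
  set S := AddSubgroup.closure
    {x : {x : A // x ≠ 0} →₀ ℤ | ∃ (j : Fin m) (a : A), x = e a - e (g j) - e (a - g j)}
  let f : A → _ ⧸ S := fun a => e a
  have hf : ∀ a b, f (a + b) = f a + f b := by
    refine map_add_of_closure_eq_top (AddSubgroup.closure_range_eq_top_of_isInternal hH hInt)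
      (by simp [f, e]) ?_
    rintro a _ ⟨j, rfl⟩
    show (e (a + g j) : _ ⧸ S) = ↑(e a + e (g j))
    rw [QuotientAddGroup.eq_iff_sub_mem, sub_add_eq_sub_sub_swap]
    have hmem : e (a + g j) - e (g j) - e (a + g j - g j) ∈ S :=
      AddSubgroup.subset_closure ⟨j, a + g j, rfl⟩
    rwa [add_sub_cancel_right] at hmem
  rw [AddSubgroup.closure_le]
  rintro _ ⟨a, b, rfl⟩
  rw [SetLike.mem_coe, ← QuotientAddGroup.eq_zero_iff, QuotientAddGroup.mk_sub,
    QuotientAddGroup.mk_sub]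
  change f (a + b) - f a - f b = 0
  rw [hf, sub_sub, sub_self]

theorem closure_Btilde_eq_R {A : Type*} [AddCommGroup A] [Fintype A] [DecidableEq A]
    (m : ℕ) (g : Fin m → A) (H : Fin m → AddSubgroup A)
    (hH : ∀ j, H j = AddSubgroup.zmultiples (g j))
    (hg : ∀ j, g j ≠ 0)
    (hInt : DirectSum.IsInternal H) :
    AddSubgroup.closure
        {x : {x : A // x ≠ 0} →₀ ℤ | ∃ (j : Fin m) (a : A), x = e a - e (g j) - e (a - g j)}
      = AddSubgroup.closure
        {x : {x : A // x ≠ 0} →₀ ℤ | ∃ a b : A, x = e (a + b) - e a - e b} :=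
  closure_Btilde_eq_R_general m g H hH hInt
end

section
/- Let k be a field, let M and N be additive commutative monoids, and let f : M →+ N be an additive monoid homomorphism. The induced k-algebra homomorphism φ : k[M] → k[N] between the monoid algebras, determined by φ(X^u) = X^{f(u)} on monomials, has kernel spanned as a k-vector space (and therefore generated as an ideal) by the binomials X^u − X^v for pairs u, v ∈ M with f(u) = f(v). -/
/-!
Choose in every fiber of `f` a representative and let `g : M → M` send `u` to the representative
of its fiber. Then `X^u - X^(g u)` is one of the binomials, so every `x` is congruent to
`mapDomain g x` modulo their span; and `mapDomain g x` factors through the image of `x` in `k[N]`,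
so it vanishes when `x` lies in the kernel.
-/

open Function

namespace AddMonoidAlgebra

variable {R M N : Type*}

def binomials (R : Type*) [Ring R] (f : M → N) : Set (AddMonoidAlgebra R M) :=
  {x | ∃ u v : M, f u = f v ∧ x = single u (1 : R) - single v (1 : R)}

theorem mapDomain_comp [Semiring R] {O : Type*} (f : M → N) (g : N → O)
    (x : AddMonoidAlgebra R M) : mapDomain (g ∘ f) x = mapDomain g (mapDomain f x) := by
  ext; simp [Finsupp.mapDomain_comp]

theorem sub_mapDomain_mem_span_binomials [Ring R] {f : M → N} {g : M → M}
    (hg : ∀ a, f (g a) = f a) (x : AddMonoidAlgebra R M) :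
    x - mapDomain g x ∈ Submodule.span R (binomials R f) := by
  induction x using AddMonoidAlgebra.induction_linear with
  | zero => simp
  | add x y hx hy =>
    rw [mapDomain_add, add_sub_add_comm]
    exact add_mem hx hy
  | single a r =>
    have hbinomial : single a r - single (g a) r = r • (single a 1 - single (g a) 1) := by
      simp [smul_sub]
    rw [mapDomain_single, hbinomial]
    exact Submodule.smul_mem _ r (Submodule.subset_span ⟨a, g a, (hg a).symm, rfl⟩)

variable [CommRing R] [AddMonoid M] [AddMonoid N]

theorem binomials_subset_ker (f : M →+ N) :
    binomials R f ⊆ RingHom.ker (mapDomainRingHom R f) := by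
  rintro _ ⟨u, v, huv, rfl⟩
  rw [SetLike.mem_coe, RingHom.mem_ker, map_sub]
  simp [huv]

theorem ker_mapDomainRingHom_le_span_binomials (f : M →+ N) :
    (RingHom.ker (mapDomainRingHom R f)).restrictScalars R ≤ Submodule.span R (binomials R f) := by
  intro x hx
  have hcollapse : mapDomain (invFun f ∘ f) x = 0 := by
    rw [mapDomain_comp]
    simpa using congrArg (mapDomain (invFun f)) (RingHom.mem_ker.mp hx)
  simpa [hcollapse] using sub_mapDomain_mem_span_binomials (f := f) (g := invFun f ∘ f)
    (fun a => invFun_eq ⟨a, rfl⟩) x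

theorem span_binomials_eq_ker (f : M →+ N) :
    Submodule.span R (binomials R f) = (RingHom.ker (mapDomainRingHom R f)).restrictScalars R :=
  le_antisymm (Submodule.span_le.mpr (binomials_subset_ker f))
    (ker_mapDomainRingHom_le_span_binomials f)

theorem ideal_span_binomials_eq_ker (f : M →+ N) :
    Ideal.span (binomials R f) = RingHom.ker (mapDomainRingHom R f) := by
  refine le_antisymm (Ideal.span_le.mpr (binomials_subset_ker f)) fun x hx => ?_
  rw [← Submodule.restrictScalars_mem R, ← span_binomials_eq_ker] at hx
  exact Submodule.span_le_restrictScalars R _ _ hx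

end AddMonoidAlgebra

theorem ker_mapDomainRingHom_spanned_by_binomials
    (k : Type*) [Field k] {M N : Type*} [AddCommMonoid M] [AddCommMonoid N]
    (f : M →+ N) :
    Submodule.span k
        {x : AddMonoidAlgebra k M | ∃ u v : M, f u = f v ∧
          x = AddMonoidAlgebra.single u (1 : k) - AddMonoidAlgebra.single v (1 : k)}
      = (RingHom.ker (AddMonoidAlgebra.mapDomainRingHom k f)).restrictScalars k ∧
    Ideal.span
        {x : AddMonoidAlgebra k M | ∃ u v : M, f u = f v ∧
          x = AddMonoidAlgebra.single u (1 : k) - AddMonoidAlgebra.single v (1 : k)}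
      = RingHom.ker (AddMonoidAlgebra.mapDomainRingHom k f) :=
  ⟨AddMonoidAlgebra.span_binomials_eq_ker f, AddMonoidAlgebra.ideal_span_binomials_eq_ker f⟩
end

section
/- If w : Fin n →₀ ℕ satisfies Σ_{i} w(i) • κ(i) = 0 in A, then there exists u : (A × Fin n) →₀ ℕ with div(u) = w and inc(u) = 0. (In the quiver language: every effective degree-zero label lifts to a cycle in the McKay quiver, i.e. a nonnegative integral combination of arrows with vanishing incidence.) -/
namespace McKayQuiver

variable {A ι : Type*} [AddCommGroup A] (κ : ι → A)

noncomputable def walk : A → List ι → A × ι →₀ ℕ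
  | _, [] => 0
  | a, i :: L => Finsupp.single (a, i) 1 + walk (a + κ i) L

theorem mapDomain_snd_walk [DecidableEq ι] (a : A) (L : List ι) :
    Finsupp.mapDomain Prod.snd (walk κ a L) = Multiset.toFinsupp (L : Multiset ι) := by
  induction L generalizing a with
  | nil => simp [walk]
  | cons i L ih =>
    rw [walk, Finsupp.mapDomain_add, Finsupp.mapDomain_single, ih, ← Multiset.cons_coe,
      ← Multiset.singleton_add, Multiset.toFinsupp_add, Multiset.toFinsupp_singleton]

theorem sum_walk_sub {M : Type*} [AddCommGroup M] (f : A → M) (a : A) (L : List ι) :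
    ((walk κ a L).sum fun p c => (c : ℤ) • (f (p.1 + κ p.2) - f p.1)) =
      f (a + (L.map κ).sum) - f a := by
  induction L generalizing a with
  | nil => simp [walk]
  | cons i L ih =>
    rw [walk, Finsupp.sum_add_index' (fun _ => by simp) (fun _ _ _ => by push_cast; rw [add_smul]),
      Finsupp.sum_single_index (by simp), ih, List.map_cons, List.sum_cons, ← add_assoc]
    simp only [Nat.cast_one, one_smul]
    abel

theorem sum_map_toList_toMultiset (w : ι →₀ ℕ) :
    ((Finsupp.toMultiset w).toList.map κ).sum = w.sum fun i c => c • κ i := by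
  rw [← Multiset.sum_coe, ← Multiset.map_coe, Multiset.coe_toList, Finsupp.toMultiset_map,
    Finsupp.sum_toMultiset,
    Finsupp.sum_mapDomain_index (fun b => zero_smul ℕ b) (fun b m₁ m₂ => add_smul m₁ m₂ b)]

end McKayQuiver

open McKayQuiver in
theorem exists_cycle_with_label_general {A : Type*} [AddCommGroup A] [DecidableEq A]
    {n : ℕ} (κ : Fin n → A)
    (w : Fin n →₀ ℕ) (hw : (w.sum fun i c => c • κ i) = 0) :
    ∃ u : A × Fin n →₀ ℕ,
      Finsupp.mapDomain Prod.snd u = w ∧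
      (u.sum fun p c => (c : ℤ) • (e (p.1 + κ p.2) - e p.1)) = 0 := by
  refine ⟨walk κ 0 (Finsupp.toMultiset w).toList, ?_, ?_⟩
  · rw [mapDomain_snd_walk, Multiset.coe_toList, Finsupp.toMultiset_toFinsupp]
  · rw [sum_walk_sub, sum_map_toList_toMultiset, hw, add_zero, sub_self]

theorem exists_cycle_with_label {A : Type*} [AddCommGroup A] [Fintype A] [DecidableEq A]
    {n : ℕ} (hn : 1 ≤ n) (κ : Fin n → A)
    (hκ : AddSubgroup.closure (Set.range κ) = ⊤)
    (w : Fin n →₀ ℕ) (hw : (w.sum fun i c => c • κ i) = 0) :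
    ∃ u : A × Fin n →₀ ℕ,
      Finsupp.mapDomain Prod.snd u = w ∧
      (u.sum fun p c => (c : ℤ) • (e (p.1 + κ p.2) - e p.1)) = 0 :=
  exists_cycle_with_label_general κ w hw
end

section
/- Let k be a field. In the monoid algebra k[(A × Fin n →₀ ℕ) × R], with monomials X^{(u,v)} for u : A × Fin n →₀ ℕ and v ∈ R, let I_𝓛 be the ideal generated by all differences X^{(u₁,v₁)} − X^{(u₂,v₂)} such that div(u₁) = div(u₂) and inc(u₁) + v₁ = inc(u₂) + v₂ in F. Then the quotient k[(A × Fin n →₀ ℕ) × R]/I_𝓛 is isomorphic as a k-algebra to the monoid algebra k[(Fin n →₀ ℕ) × R], that is, to the tensor product over k of a polynomial ring in n variables with the group algebra k[R]. -/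
/-- The homomorphism `pic : F →+ A` determined by `pic (e a) = a` for `a ≠ 0`. -/
noncomputable def pic (A : Type*) [AddCommGroup A] : ({x : A // x ≠ 0} →₀ ℤ) →+ A :=
  Finsupp.liftAddHom fun s => zmultiplesHom A s.val

namespace AddMonoidAlgebra

variable (k : Type*) [CommRing k] {M N : Type*} [AddCommMonoid M] [AddCommMonoid N]

noncomputable def binomialIdeal (φ : M →+ N) : Ideal (AddMonoidAlgebra k M) :=
  Ideal.span {x | ∃ m₁ m₂, φ m₁ = φ m₂ ∧ x = single m₁ 1 - single m₂ 1}

variable {k}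

theorem sub_mapDomain_mem_binomialIdeal {φ : M →+ N} {σ : N → M}
    (hσ : Function.RightInverse σ φ) (x : AddMonoidAlgebra k M) :
    x - mapDomain σ (mapDomainAlgHom k k φ x) ∈ binomialIdeal k φ := by
  induction x using induction_linear with
  | zero => simp
  | add x y hx hy =>
    rw [map_add, mapDomain_add, add_sub_add_comm]
    exact add_mem hx hy
  | single m r =>
    have hbin : single m 1 - single (σ (φ m)) 1 ∈ binomialIdeal k φ :=
      Ideal.subset_span ⟨m, σ (φ m), (hσ (φ m)).symm, rfl⟩
    simpa [smul_sub, smul_single'] using Submodule.smul_of_tower_mem _ r hbin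

theorem ker_mapDomainAlgHom {φ : M →+ N} {σ : N → M} (hσ : Function.RightInverse σ φ) :
    RingHom.ker (mapDomainAlgHom k k φ) = binomialIdeal k φ := by
  refine le_antisymm (fun x hx => ?_) (Ideal.span_le.2 ?_)
  · simpa [(RingHom.mem_ker).1 hx] using sub_mapDomain_mem_binomialIdeal hσ x
  · rintro _ ⟨m₁, m₂, h, rfl⟩
    rw [SetLike.mem_coe, RingHom.mem_ker, map_sub]
    simp [h]

theorem mapDomainAlgHom_rightInverse {φ : M →+ N} {σ : N → M} (hσ : Function.RightInverse σ φ) :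
    Function.RightInverse (mapDomain σ) (mapDomainAlgHom k k φ) := by
  intro y
  induction y using induction_linear with
  | zero => simp
  | add x y hx hy => rw [mapDomain_add, map_add, hx, hy]
  | single m r => simp [hσ m]

variable (k)

noncomputable def quotientBinomialIdealEquiv {φ : M →+ N} {σ : N → M}
    (hσ : Function.RightInverse σ φ) :
    (AddMonoidAlgebra k M ⧸ binomialIdeal k φ) ≃ₐ[k] AddMonoidAlgebra k N :=
  (Ideal.quotientEquivAlgOfEq k (ker_mapDomainAlgHom hσ).symm).trans
    (Ideal.quotientKerAlgEquivOfRightInverse (mapDomainAlgHom_rightInverse hσ))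

end AddMonoidAlgebra

section McKay

variable {A : Type*} {n : ℕ}

noncomputable def mckayDiv : (A × Fin n →₀ ℕ) →+ (Fin n →₀ ℕ) :=
  Finsupp.mapDomain.addMonoidHom Prod.snd

variable (A) in
noncomputable def arrowsAtZero [Zero A] : (Fin n →₀ ℕ) →+ (A × Fin n →₀ ℕ) :=
  Finsupp.mapDomain.addMonoidHom fun i => ((0 : A), i)

theorem mckayDiv_apply (u : A × Fin n →₀ ℕ) : mckayDiv u = Finsupp.mapDomain Prod.snd u := rfl

theorem mckayDiv_arrowsAtZero [Zero A] (d : Fin n →₀ ℕ) : mckayDiv (arrowsAtZero A d) = d := by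
  rw [mckayDiv, arrowsAtZero, Finsupp.mapDomain.addMonoidHom_apply,
    Finsupp.mapDomain.addMonoidHom_apply, ← Finsupp.mapDomain_comp]
  exact Finsupp.mapDomain_id

variable [AddCommGroup A] [DecidableEq A] (κ : Fin n → A)

theorem pic_e (a : A) : pic A (e a) = a := by
  by_cases h : a = 0 <;> simp [e, pic, h]

noncomputable def mckayInc : (A × Fin n →₀ ℕ) →+ ({x : A // x ≠ 0} →₀ ℤ) :=
  Finsupp.liftAddHom fun p => multiplesHom _ (e (p.1 + κ p.2) - e p.1)

theorem mckayInc_apply (u : A × Fin n →₀ ℕ) :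
    mckayInc κ u = u.sum fun p c => (c : ℤ) • (e (p.1 + κ p.2) - e p.1) :=
  Finsupp.sum_congr fun p _ => by simp [natCast_zsmul]

theorem pic_mckayInc (u : A × Fin n →₀ ℕ) :
    pic A (mckayInc κ u) = pic A (mckayInc κ (arrowsAtZero A (mckayDiv u))) := by
  have h : (pic A).comp (mckayInc κ) = ((pic A).comp (mckayInc κ)).comp
      ((arrowsAtZero A).comp mckayDiv) := by
    refine Finsupp.addHom_ext fun p c => ?_
    simp [mckayInc, arrowsAtZero, mckayDiv, pic_e, smul_sub]
  exact DFunLike.congr_fun h u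

noncomputable def mckayTwist : (A × Fin n →₀ ℕ) →+ (pic A).ker :=
  AddMonoidHom.codRestrict (mckayInc κ - (mckayInc κ).comp ((arrowsAtZero A).comp mckayDiv)) _
    fun u => by simp [AddMonoidHom.mem_ker, pic_mckayInc κ u]

theorem coe_mckayTwist (u : A × Fin n →₀ ℕ) :
    (mckayTwist κ u : {x : A // x ≠ 0} →₀ ℤ)
      = mckayInc κ u - mckayInc κ (arrowsAtZero A (mckayDiv u)) := rfl

noncomputable def mckayPhi : (A × Fin n →₀ ℕ) × (pic A).ker →+ (Fin n →₀ ℕ) × (pic A).ker :=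
  (mckayDiv.comp (.fst _ _)).prod ((mckayTwist κ).comp (.fst _ _) + .snd _ _)

theorem mckayPhi_eq_iff {m₁ m₂ : (A × Fin n →₀ ℕ) × (pic A).ker} :
    mckayPhi κ m₁ = mckayPhi κ m₂ ↔
      mckayDiv m₁.1 = mckayDiv m₂.1 ∧
        mckayInc κ m₁.1 + (m₁.2 : _) = mckayInc κ m₂.1 + (m₂.2 : _) := by
  simp only [mckayPhi, AddMonoidHom.prod_apply, Prod.mk.injEq, Subtype.ext_iff,
    AddMonoidHom.coe_comp, Function.comp_apply, AddMonoidHom.add_apply, AddMonoidHom.coe_fst,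
    AddMonoidHom.coe_snd, AddSubgroup.coe_add, coe_mckayTwist]
  refine and_congr_right fun hdiv => ?_
  rw [hdiv, sub_add_eq_add_sub, sub_add_eq_add_sub, sub_left_inj]

theorem mckayPhi_rightInverse :
    Function.RightInverse (Prod.map (arrowsAtZero A) id) (mckayPhi κ) := fun x => by
  refine Prod.ext (mckayDiv_arrowsAtZero x.1) (Subtype.ext ?_)
  simp [mckayPhi, coe_mckayTwist, mckayDiv_arrowsAtZero]

end McKay

theorem quotient_by_IL_iso_polynomial_tensor_groupAlgebra_general
    (k : Type*) [Field k] {A : Type*} [AddCommGroup A] [DecidableEq A]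
    {n : ℕ} (κ : Fin n → A) :
    Nonempty
      ((AddMonoidAlgebra k ((A × Fin n →₀ ℕ) × (pic A).ker) ⧸
          Ideal.span
            {x : AddMonoidAlgebra k ((A × Fin n →₀ ℕ) × (pic A).ker) |
              ∃ (u₁ u₂ : A × Fin n →₀ ℕ) (v₁ v₂ : (pic A).ker),
                Finsupp.mapDomain Prod.snd u₁ = Finsupp.mapDomain Prod.snd u₂ ∧
                (u₁.sum fun p c => (c : ℤ) • (e (p.1 + κ p.2) - e p.1)) + (v₁ : _)
                  = (u₂.sum fun p c => (c : ℤ) • (e (p.1 + κ p.2) - e p.1)) + (v₂ : _) ∧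
                x = AddMonoidAlgebra.single (u₁, v₁) (1 : k)
                      - AddMonoidAlgebra.single (u₂, v₂) (1 : k)})
        ≃ₐ[k] AddMonoidAlgebra k ((Fin n →₀ ℕ) × (pic A).ker)) := by
  refine ⟨(Ideal.quotientEquivAlgOfEq k ?_).trans
    (AddMonoidAlgebra.quotientBinomialIdealEquiv k (mckayPhi_rightInverse κ))⟩
  refine congrArg Ideal.span (Set.ext fun x => ?_)
  simp only [Set.mem_ofPred_eq, Prod.exists, mckayPhi_eq_iff, mckayDiv_apply, mckayInc_apply,
    and_assoc]
  constructor
  · rintro ⟨u₁, u₂, v₁, v₂, h⟩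
    exact ⟨u₁, v₁, u₂, v₂, h⟩
  · rintro ⟨u₁, v₁, u₂, v₂, h⟩
    exact ⟨u₁, u₂, v₁, v₂, h⟩

theorem quotient_by_IL_iso_polynomial_tensor_groupAlgebra
    (k : Type*) [Field k] {A : Type*} [AddCommGroup A] [Fintype A] [DecidableEq A]
    {n : ℕ} (hn : 1 ≤ n) (κ : Fin n → A)
    (hκ : AddSubgroup.closure (Set.range κ) = ⊤) :
    Nonempty
      ((AddMonoidAlgebra k ((A × Fin n →₀ ℕ) × (pic A).ker) ⧸
          Ideal.span
            {x : AddMonoidAlgebra k ((A × Fin n →₀ ℕ) × (pic A).ker) |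
              ∃ (u₁ u₂ : A × Fin n →₀ ℕ) (v₁ v₂ : (pic A).ker),
                Finsupp.mapDomain Prod.snd u₁ = Finsupp.mapDomain Prod.snd u₂ ∧
                (u₁.sum fun p c => (c : ℤ) • (e (p.1 + κ p.2) - e p.1)) + (v₁ : _)
                  = (u₂.sum fun p c => (c : ℤ) • (e (p.1 + κ p.2) - e p.1)) + (v₂ : _) ∧
                x = AddMonoidAlgebra.single (u₁, v₁) (1 : k)
                      - AddMonoidAlgebra.single (u₂, v₂) (1 : k)})
        ≃ₐ[k] AddMonoidAlgebra k ((Fin n →₀ ℕ) × (pic A).ker)) :=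
  quotient_by_IL_iso_polynomial_tensor_groupAlgebra_general k κ
end
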